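/- arXiv:2502.06547 — 3 statements merged into one kernel-verified Lean document; each statement's English description precedes it below -/
import Mathlib

section
/- Assume the compatibility condition Π_L Π_G = Π_G Π_L and that R is continuously differentiable with locally Lipschitz gradient. Let A* ∈ E be a stationary point. Call A* Lyapunov stable for a dynamics A' = F(A) on a set M ∋ A* if for every ε > 0 there exists δ > 0 such that every solution of the dynamics starting in M within distance δ of A* exists for all t ≥ 0 and remains within distance ε of A*. If A* is Lyapunov stable for the augmented dynamics A' = −Π_L ∇R^aug(A) on L, then A* is Lyapunov stable for the equivariant dynamics A' = −Π_E ∇R(A) on E. -/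
/-!
At a point `A` of `H_G` every `ρ(g) A` equals `A`, so differentiating under the integral sign gives
`dR^aug(A) v = dR(A) (∫_G ρ(g) v dμ(g))`, and averaging over the invariant probability measure is
the orthogonal projection `Π_G`. Hence `∇R^aug = Π_G ∇R` on `H_G`, and since commuting orthogonal
projections compose to the projection onto the intersection, `Π_L ∇R^aug = Π_E ∇R` on `E`. Thus the
solutions of the equivariant dynamics in `E` are solutions of the augmented dynamics in `L`, and
stability passes to this smaller family of solutions.
-/

open MeasureTheory InnerProductSpace RealInnerProductSpace

noncomputable section

/-- The fixed-point subspace `H_G = {v : ρ(g) v = v for all g}` of an orthogonal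
representation `ρ : G → O(V)`. -/
def fixedSubmodule {G V : Type*} [Group G] [NormedAddCommGroup V] [InnerProductSpace ℝ V]
    (ρ : G →* (V ≃ₗᵢ[ℝ] V)) : Submodule ℝ V where
  carrier := {v | ∀ g : G, ρ g v = v}
  add_mem' := by
    intro a b ha hb g
    simp [map_add, ha g, hb g]
  zero_mem' := by
    intro g
    simp
  smul_mem' := by
    intro c a ha g
    rw [_root_.map_smul, ha g]

/-- The orthogonal projection onto a subspace `K`, as a map `V → V`. -/
def projSub {V : Type*} [NormedAddCommGroup V] [InnerProductSpace ℝ V] (K : Submodule ℝ V)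
    [K.HasOrthogonalProjection] : V →L[ℝ] V :=
  K.subtypeL.comp K.orthogonalProjectionOnto

/-- The augmented risk `R^aug(A) = ∫_G R(ρ(g) A) dμ(g)`. -/
def augRisk {G V : Type*} [Group G] [MeasurableSpace G]
    [NormedAddCommGroup V] [InnerProductSpace ℝ V]
    (μ : Measure G) (ρ : G →* (V ≃ₗᵢ[ℝ] V)) (R : V → ℝ) : V → ℝ :=
  fun A => ∫ g, R (ρ g A) ∂μ

/-- The Hessian of `f : V → ℝ` at `A`, regarded as a linear map `V → V`
(the derivative of the gradient field). -/
def hess {V : Type*} [NormedAddCommGroup V] [InnerProductSpace ℝ V] [CompleteSpace V]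
    (f : V → ℝ) (A : V) : V →L[ℝ] V :=
  fderiv ℝ (gradient f) A

/-- `Astar` is Lyapunov stable for the dynamics `A' = F(A)` on the set `M`: for every
`ε > 0` there is `δ > 0` such that every (globally defined) solution of the dynamics
taking values in `M` and starting within distance `δ` of `Astar` remains within distance
`ε` of `Astar` for all `t ≥ 0`. -/
def IsLyapunovStable {V : Type*} [NormedAddCommGroup V] [NormedSpace ℝ V]
    (F : V → V) (M : Set V) (Astar : V) : Prop :=
  ∀ ε > (0 : ℝ), ∃ δ > (0 : ℝ), ∀ A : ℝ → V,
    (∀ t : ℝ, 0 ≤ t → A t ∈ M) →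
    (∀ t : ℝ, 0 ≤ t → HasDerivAt A (F (A t)) t) →
    ‖A 0 - Astar‖ < δ →
    ∀ t : ℝ, 0 ≤ t → ‖A t - Astar‖ < ε

lemma projSub_apply {V : Type*} [NormedAddCommGroup V] [InnerProductSpace ℝ V]
    (K : Submodule ℝ V) [K.HasOrthogonalProjection] (v : V) :
    projSub K v = K.starProjection v := rfl

theorem Submodule.starProjection_inf_apply_of_commute {𝕜 E : Type*} [RCLike 𝕜]
    [NormedAddCommGroup E] [InnerProductSpace 𝕜 E] (K L : Submodule 𝕜 E)
    [K.HasOrthogonalProjection] [L.HasOrthogonalProjection] [(K ⊓ L).HasOrthogonalProjection]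
    (h : Commute K.starProjection L.starProjection) (v : E) :
    (K ⊓ L).starProjection v = L.starProjection (K.starProjection v) := by
  have hmemK : L.starProjection (K.starProjection v) ∈ K := by
    rw [← mul_apply_eq_comp, ← h.eq]
    exact K.starProjection_apply_mem _
  refine eq_starProjection_of_mem_of_inner_eq_zero
    (mem_inf.mpr ⟨hmemK, L.starProjection_apply_mem _⟩) fun w hw => ?_
  rw [inner_sub_left, inner_starProjection_left_eq_right,
    starProjection_eq_self_iff.mpr (mem_inf.mp hw).2, inner_starProjection_left_eq_right,
    starProjection_eq_self_iff.mpr (mem_inf.mp hw).1, sub_self]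

theorem IsLyapunovStable.of_subset_of_eqOn {V : Type*} [NormedAddCommGroup V] [NormedSpace ℝ V]
    {F F' : V → V} {M M' : Set V} {x : V} (h : IsLyapunovStable F M x) (hM : M' ⊆ M)
    (hF : Set.EqOn F F' M') : IsLyapunovStable F' M' x := by
  intro ε hε
  obtain ⟨δ, hδ, hsol⟩ := h ε hε
  refine ⟨δ, hδ, fun A hA hderiv => hsol A (fun t ht => hM (hA t ht)) fun t ht => ?_⟩
  rw [hF (hA t ht)]
  exact hderiv t ht

section Representation

variable {G V : Type*} [Group G] [NormedAddCommGroup V] [InnerProductSpace ℝ V]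
  {ρ : G →* (V ≃ₗᵢ[ℝ] V)}

lemma integral_rep_apply_mem_fixedSubmodule [CompleteSpace V] [MeasurableSpace G] [MeasurableMul G]
    {μ : Measure G} [μ.IsMulLeftInvariant] (v : V) : ∫ g, ρ g v ∂μ ∈ fixedSubmodule ρ := fun h =>
  calc ρ h (∫ g, ρ g v ∂μ) = ∫ g, ρ (h * g) v ∂μ := by
        simp only [map_mul, LinearIsometryEquiv.coe_mul, Function.comp_apply]
        exact ((ρ h).toLinearIsometry.integral_comp_comm _).symm
    _ = ∫ g, ρ g v ∂μ := integral_mul_left_eq_self (fun g => ρ g v) h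

variable [TopologicalSpace G]

lemma continuous_rep_apply (hρ : Continuous fun p : G × V => ρ p.1 p.2) (v : V) :
    Continuous fun g => ρ g v :=
  hρ.comp (continuous_id.prodMk continuous_const)

variable [FiniteDimensional ℝ V]

lemma continuous_rep_toContinuousLinearMap (hρ : Continuous fun p : G × V => ρ p.1 p.2) :
    Continuous fun g => (ρ g : V →L[ℝ] V) :=
  continuous_clm_apply.mpr (continuous_rep_apply hρ)

variable [MeasurableSpace G] [BorelSpace G] {μ : Measure G}

lemma integrable_comp_rep_apply {E : Type*} [NormedAddCommGroup E] [IsFiniteMeasure μ]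
    (hρ : Continuous fun p : G × V => ρ p.1 p.2) {f : V → E} (hf : Continuous f) (v : V) :
    Integrable (fun g => f (ρ g v)) μ := by
  obtain ⟨C, hC⟩ := (isCompact_closedBall (0 : V) ‖v‖).exists_bound_of_continuousOn
    hf.continuousOn
  exact .of_bound (hf.comp_aestronglyMeasurable (continuous_rep_apply hρ v).aestronglyMeasurable)
    C (.of_forall fun g => hC _ (by simp))

theorem integral_rep_apply_eq_starProjection [MeasurableMul G] [IsProbabilityMeasure μ]
    [μ.IsMulLeftInvariant] (hρ : Continuous fun p : G × V => ρ p.1 p.2) (v : V) :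
    ∫ g, ρ g v ∂μ = (fixedSubmodule ρ).starProjection v := by
  refine (Submodule.eq_starProjection_of_mem_of_inner_eq_zero
    (integral_rep_apply_mem_fixedSubmodule v) fun w hw => ?_).symm
  have hinv : ∀ g, ⟪w, ρ g v⟫ = ⟪w, v⟫ := fun g => by
    conv_lhs => rw [← hw g]
    exact (ρ g).inner_map_map w v
  have hint : Integrable (fun g => ρ g v) μ := integrable_comp_rep_apply hρ continuous_id v
  rw [inner_sub_left, real_inner_comm w (∫ g, ρ g v ∂μ), ← integral_inner hint, funext hinv]
  simp [real_inner_comm]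

end Representation

section AugmentedRisk

variable {G V : Type*} [Group G] [TopologicalSpace G] [MeasurableSpace G] [BorelSpace G]
  [NormedAddCommGroup V] [InnerProductSpace ℝ V] [FiniteDimensional ℝ V]
  {μ : Measure G} {ρ : G →* (V ≃ₗᵢ[ℝ] V)} {R : V → ℝ}

/-- The domination bound is `sup ‖fderiv R‖` over the ball of radius `‖A‖ + 1`, which contains
every `ρ g x` with `x ∈ ball A 1`. -/
theorem hasFDerivAt_augRisk [IsFiniteMeasure μ] (hρ : Continuous fun p : G × V => ρ p.1 p.2)
    (hR : ContDiff ℝ 1 R) (A : V) :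
    HasFDerivAt (augRisk μ ρ R) (∫ g, (fderiv ℝ R (ρ g A)).comp (ρ g : V →L[ℝ] V) ∂μ) A := by
  have hR' : Continuous (fderiv ℝ R) := hR.continuous_fderiv one_ne_zero
  obtain ⟨C, hC⟩ := (isCompact_closedBall (0 : V) (‖A‖ + 1)).exists_bound_of_continuousOn
    hR'.continuousOn
  refine hasFDerivAt_integral_of_dominated_of_fderiv_le (bound := fun _ => C)
    (Metric.ball_mem_nhds A one_pos)
    (.of_forall fun x => (hR.continuous.comp (continuous_rep_apply hρ x)).aestronglyMeasurable)
    (integrable_comp_rep_apply hρ hR.continuous A)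
    ((hR'.comp (continuous_rep_apply hρ A)).clm_comp
      (continuous_rep_toContinuousLinearMap hρ)).aestronglyMeasurable
    (.of_forall fun g x hx => ?_) (integrable_const C)
    (.of_forall fun g x _ => ((hR.differentiable one_ne_zero _).hasFDerivAt).comp x
      (ρ g : V →L[ℝ] V).hasFDerivAt)
  rw [ContinuousLinearMap.opNorm_comp_linearIsometryEquiv]
  refine hC _ ?_
  rw [mem_closedBall_zero_iff, LinearIsometryEquiv.norm_map]
  exact (norm_lt_of_mem_ball hx).le

theorem gradient_augRisk_of_mem_fixedSubmodule [MeasurableMul G] [IsProbabilityMeasure μ]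
    [μ.IsMulLeftInvariant] (hρ : Continuous fun p : G × V => ρ p.1 p.2) (hR : ContDiff ℝ 1 R)
    {A : V} (hA : A ∈ fixedSubmodule ρ) :
    gradient (augRisk μ ρ R) A = (fixedSubmodule ρ).starProjection (gradient R A) := by
  have hint : Integrable (fun g => (fderiv ℝ R A).comp (ρ g : V →L[ℝ] V)) μ :=
    .of_bound (continuous_const.clm_comp
      (continuous_rep_toContinuousLinearMap hρ)).aestronglyMeasurable ‖fderiv ℝ R A‖
      (.of_forall fun g => by simp)
  have hD : ∫ g, (fderiv ℝ R (ρ g A)).comp (ρ g : V →L[ℝ] V) ∂μ =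
      toDual ℝ V ((fixedSubmodule ρ).starProjection (gradient R A)) := by
    simp only [show ∀ g, ρ g A = A from hA]
    ext v
    have hint_rep : Integrable (fun g => ρ g v) μ := integrable_comp_rep_apply hρ continuous_id v
    simp only [ContinuousLinearMap.integral_apply hint, ContinuousLinearMap.comp_apply,
      ContinuousLinearEquiv.coe_coe, LinearIsometryEquiv.coe_toContinuousLinearEquiv]
    rw [ContinuousLinearMap.integral_comp_comm _ hint_rep, integral_rep_apply_eq_starProjection hρ,
      ← toDual_gradient, toDual_apply_apply, toDual_apply_apply,
      Submodule.inner_starProjection_left_eq_right]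
  exact (hasGradientAt_iff_hasFDerivAt.mpr (hD ▸ hasFDerivAt_augRisk hρ hR A)).gradient

end AugmentedRisk

theorem stable_for_augmented_implies_stable_for_equivariant_general
    {G V : Type*} [Group G] [TopologicalSpace G] [IsTopologicalGroup G]
    [MeasurableSpace G] [BorelSpace G]
    [NormedAddCommGroup V] [InnerProductSpace ℝ V] [FiniteDimensional ℝ V]
    (μ : Measure G) [μ.IsHaarMeasure] [IsProbabilityMeasure μ]
    (ρ : G →* (V ≃ₗᵢ[ℝ] V)) (hρ : Continuous fun p : G × V => ρ p.1 p.2)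
    (L : Submodule ℝ V)
    (hcompat : (projSub L).comp (projSub (fixedSubmodule ρ)) =
      (projSub (fixedSubmodule ρ)).comp (projSub L))
    (R : V → ℝ) (hR : ContDiff ℝ 1 R)
    (Astar : V)
    (hstab : IsLyapunovStable
      (fun A => -(projSub L (gradient (augRisk μ ρ R) A))) (L : Set V) Astar) :
    IsLyapunovStable (fun A => -(projSub (fixedSubmodule ρ ⊓ L) (gradient R A)))
      ((fixedSubmodule ρ ⊓ L : Submodule ℝ V) : Set V) Astar := by
  have hE (v : V) : projSub (fixedSubmodule ρ ⊓ L) v = projSub L (projSub (fixedSubmodule ρ) v) :=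
    Submodule.starProjection_inf_apply_of_commute _ _ hcompat.symm v
  refine hstab.of_subset_of_eqOn (fun A hA => hA.2) fun A hA => ?_
  rw [hE, projSub_apply (fixedSubmodule ρ), ← gradient_augRisk_of_mem_fixedSubmodule (μ := μ) hρ hR hA.1]

/-- Under the compatibility condition, a stationary point `Astar ∈ E` that is
Lyapunov stable for the augmented dynamics `A' = -Π_L ∇R^aug(A)` on `L` is also Lyapunov
stable for the equivariant dynamics `A' = -Π_E ∇R(A)` on `E`. -/
theorem stable_for_augmented_implies_stable_for_equivariant
    {G V : Type*} [Group G] [TopologicalSpace G] [IsTopologicalGroup G] [CompactSpace G]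
    [MeasurableSpace G] [BorelSpace G]
    [NormedAddCommGroup V] [InnerProductSpace ℝ V] [FiniteDimensional ℝ V]
    (μ : Measure G) [μ.IsHaarMeasure] [IsProbabilityMeasure μ]
    (ρ : G →* (V ≃ₗᵢ[ℝ] V)) (hρ : Continuous fun p : G × V => ρ p.1 p.2)
    (L : Submodule ℝ V)
    (hcompat : (projSub L).comp (projSub (fixedSubmodule ρ)) =
      (projSub (fixedSubmodule ρ)).comp (projSub L))
    (R : V → ℝ) (hR : ContDiff ℝ 1 R) (hlip : LocallyLipschitz (gradient R))
    (Astar : V) (hAstar : Astar ∈ fixedSubmodule ρ ⊓ L)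
    (hstat : projSub (fixedSubmodule ρ ⊓ L) (gradient R Astar) = 0)
    (hstab : IsLyapunovStable
      (fun A => -(projSub L (gradient (augRisk μ ρ R) A))) (L : Set V) Astar) :
    IsLyapunovStable (fun A => -(projSub (fixedSubmodule ρ ⊓ L) (gradient R A)))
      ((fixedSubmodule ρ ⊓ L : Submodule ℝ V) : Set V) Astar :=
  stable_for_augmented_implies_stable_for_equivariant_general μ ρ hρ L hcompat R hR Astar hstab
end
end

section
/- Assume L is invariant under the representation (ρ(g)(L) ⊆ L for all g ∈ G) and R is twice continuously differentiable. If σ̄ ∈ ℝ satisfies ⟨R''(A) Y, Y⟩ ≥ σ̄ ‖Y‖² for every A ∈ E and every Y ∈ TE^⊥, then also ⟨(R^aug)''(A) Y, Y⟩ ≥ σ̄ ‖Y‖² for every A ∈ E and every Y ∈ TE^⊥; that is, the Hessian lower bound on TE^⊥ for the nominal risk transfers to the augmented risk at equivariant points. -/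
/-!
Differentiating twice under the integral sign (legitimate because `G` is compact and all
derivatives involved are jointly continuous) gives
`(R^aug)''(A)(Y, Y) = ∫ R''(ρ(g) A)(ρ(g) Y, ρ(g) Y) dμ(g)`.
For `A ∈ E` this is the average of `R''(A)(ρ(g) Y, ρ(g) Y)`, and `ρ(g)` maps `TEᗮ` to itself:
it preserves `L`, and being an isometry fixing `E` pointwise it preserves `Eᗮ`.
So every integrand is at least `σ̄ ‖ρ(g) Y‖² = σ̄ ‖Y‖²`, hence so is their average.
-/

open MeasureTheory InnerProductSpace RealInnerProductSpace

noncomputable section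

theorem inner_hess_apply {V : Type*} [NormedAddCommGroup V] [InnerProductSpace ℝ V]
    [CompleteSpace V] (f : V → ℝ) (A Y Z : V) :
    ⟪hess f A Y, Z⟫_ℝ = fderiv ℝ (fderiv ℝ f) A Y Z := by
  have : gradient f = (toDual ℝ V).symm ∘ fderiv ℝ f := rfl
  rw [hess, this, LinearIsometryEquiv.comp_fderiv]
  exact toDual_symm_apply

theorem LinearIsometryEquiv.apply_mem_orthogonal {𝕜 V : Type*} [RCLike 𝕜] [NormedAddCommGroup V]
    [InnerProductSpace 𝕜 V] (U : V ≃ₗᵢ[𝕜] V) {K : Submodule 𝕜 V} (hK : ∀ w ∈ K, U w = w)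
    {Y : V} (hY : Y ∈ Kᗮ) : U Y ∈ Kᗮ := fun w hw => by
  rw [← hK w hw, U.inner_map_map]
  exact hY w hw

theorem fderiv_fderiv_comp_clm_apply {V W E : Type*} [NormedAddCommGroup V] [NormedSpace ℝ V]
    [NormedAddCommGroup W] [NormedSpace ℝ W] [NormedAddCommGroup E] [NormedSpace ℝ E]
    {f : W → E} (hf : ContDiff ℝ 2 f) (T : V →L[ℝ] W) (x Y Z : V) :
    fderiv ℝ (fderiv ℝ fun y => f (T y)) x Y Z = fderiv ℝ (fderiv ℝ f) (T x) (T Y) (T Z) := by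
  have h := congr($(T.iteratedFDeriv_comp_right hf x le_rfl) ![Y, Z])
  simpa only [iteratedFDeriv_two_apply, ContinuousMultilinearMap.compContinuousLinearMap_apply,
    Matrix.cons_val_zero, Matrix.cons_val_one, Function.comp_def] using h

theorem Continuous.integrable_of_compactSpace {X E : Type*} [TopologicalSpace X] [CompactSpace X]
    [MeasurableSpace X] [OpensMeasurableSpace X] {μ : Measure X} [IsFiniteMeasure μ]
    [NormedAddCommGroup E] {f : X → E} (hf : Continuous f) : Integrable f μ :=
  hf.integrable_of_hasCompactSupport (HasCompactSupport.of_compactSpace f)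

section

variable {X H E : Type*} [TopologicalSpace X] [CompactSpace X] [MeasurableSpace X]
  [OpensMeasurableSpace X] {μ : Measure X} [IsFiniteMeasure μ]
  [NormedAddCommGroup H] [NormedSpace ℝ H] [ProperSpace H]
  [NormedAddCommGroup E] [NormedSpace ℝ E]

theorem hasFDerivAt_integral_of_continuous_fderiv {F : H → X → E}
    (hF : ∀ y, Continuous (F y)) (hdiff : ∀ x, Differentiable ℝ (F · x))
    (hF' : Continuous fun p : H × X => fderiv ℝ (F · p.2) p.1) (y₀ : H) :
    HasFDerivAt (fun y => ∫ x, F y x ∂μ) (∫ x, fderiv ℝ (F · x) y₀ ∂μ) y₀ := by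
  obtain ⟨C, hC⟩ := ((isCompact_closedBall y₀ 1).prod isCompact_univ).exists_bound_of_continuousOn
    hF'.continuousOn
  exact hasFDerivAt_integral_of_dominated_of_fderiv_le (bound := fun _ => C)
    (Metric.closedBall_mem_nhds y₀ one_pos)
    (.of_forall fun y => (hF y).integrable_of_compactSpace.aestronglyMeasurable)
    (hF y₀).integrable_of_compactSpace
    (hF'.comp (Continuous.prodMk_right y₀)).integrable_of_compactSpace.aestronglyMeasurable
    (.of_forall fun x y hy => hC (y, x) ⟨hy, Set.mem_univ x⟩) (integrable_const C)
    (.of_forall fun x y _ => (hdiff x y).hasFDerivAt)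

theorem fderiv_integral_of_continuous_fderiv {F : H → X → E}
    (hF : ∀ y, Continuous (F y)) (hdiff : ∀ x, Differentiable ℝ (F · x))
    (hF' : Continuous fun p : H × X => fderiv ℝ (F · p.2) p.1) :
    fderiv ℝ (fun y => ∫ x, F y x ∂μ) = fun y => ∫ x, fderiv ℝ (F · x) y ∂μ :=
  funext fun y => (hasFDerivAt_integral_of_continuous_fderiv hF hdiff hF' y).fderiv

end

section

variable {X V W E : Type*} [TopologicalSpace X] [CompactSpace X] [MeasurableSpace X]
  [OpensMeasurableSpace X] {μ : Measure X} [IsFiniteMeasure μ]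
  [NormedAddCommGroup V] [NormedSpace ℝ V] [FiniteDimensional ℝ V]
  [NormedAddCommGroup W] [NormedSpace ℝ W] [NormedAddCommGroup E] [NormedSpace ℝ E]
  {f : W → E} {T : X → V →L[ℝ] W}

theorem fderiv_fderiv_integral_comp_apply (hf : ContDiff ℝ 2 f) (hT : Continuous T)
    (y Y Z : V) :
    fderiv ℝ (fderiv ℝ (fun y => ∫ x, f (T x y) ∂μ)) y Y Z =
      ∫ x, fderiv ℝ (fderiv ℝ f) (T x y) (T x Y) (T x Z) ∂μ := by
  have hTc : ∀ Y : V, Continuous fun p : V × X => T p.2 Y :=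
    fun Y => (hT.comp continuous_snd).clm_apply continuous_const
  have hTy : Continuous fun p : V × X => T p.2 p.1 :=
    (hT.comp continuous_snd).clm_apply continuous_fst
  have hfT : ∀ x, ContDiff ℝ 2 (fun y => f (T x y)) := fun x => hf.comp (T x).contDiff
  have hfderiv : ∀ x y Y, fderiv ℝ (fun y => f (T x y)) y Y = fderiv ℝ f (T x y) (T x Y) :=
    fun x y Y => by
      rw [fderiv_fun_comp y (hf.differentiable two_ne_zero _) (T x).differentiableAt,
        ContinuousLinearMap.fderiv, ContinuousLinearMap.comp_apply]
  have hD1 : Continuous fun p : V × X => fderiv ℝ (fun y => f (T p.2 y)) p.1 :=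
    continuous_clm_apply.2 fun Y => by
      simp only [hfderiv]
      exact ((hf.continuous_fderiv two_ne_zero).comp hTy).clm_apply (hTc Y)
  have hD2 : Continuous fun p : V × X => fderiv ℝ (fderiv ℝ (fun y => f (T p.2 y))) p.1 :=
    continuous_clm_apply.2 fun Y => continuous_clm_apply.2 fun Z => by
      simp only [fderiv_fderiv_comp_clm_apply hf]
      exact ((((hf.fderiv_right (m := 1) le_rfl).continuous_fderiv one_ne_zero).comp
        hTy).clm_apply (hTc Y)).clm_apply (hTc Z)
  have hD1y : ∀ y, Continuous fun x => fderiv ℝ (fun y => f (T x y)) y :=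
    fun y => hD1.comp (Continuous.prodMk_right y)
  have hD2y : ∀ y, Continuous fun x => fderiv ℝ (fderiv ℝ (fun y => f (T x y))) y :=
    fun y => hD2.comp (Continuous.prodMk_right y)
  rw [fderiv_integral_of_continuous_fderiv (F := fun y x => f (T x y))
      (fun y => hf.continuous.comp (hTy.comp (Continuous.prodMk_right y)))
      (fun x => (hfT x).differentiable two_ne_zero) hD1,
    fderiv_integral_of_continuous_fderiv (F := fun y x => fderiv ℝ (fun y => f (T x y)) y) hD1y
      (fun x => ((hfT x).fderiv_right (m := 1) le_rfl).differentiable one_ne_zero) hD2,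
    ContinuousLinearMap.integral_apply (hD2y y).integrable_of_compactSpace,
    ContinuousLinearMap.integral_apply
      ((hD2y y).clm_apply continuous_const).integrable_of_compactSpace]
  simp only [fderiv_fderiv_comp_clm_apply hf]

end

theorem hessian_lower_bound_transfers_general
    {G V : Type*} [Group G] [TopologicalSpace G] [CompactSpace G]
    [MeasurableSpace G] [BorelSpace G]
    [NormedAddCommGroup V] [InnerProductSpace ℝ V] [FiniteDimensional ℝ V]
    (μ : Measure G) [IsProbabilityMeasure μ]
    (ρ : G →* (V ≃ₗᵢ[ℝ] V)) (hρ : Continuous fun p : G × V => ρ p.1 p.2)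
    (L : Submodule ℝ V)
    (hL : ∀ (g : G), ∀ v ∈ L, ρ g v ∈ L)
    (R : V → ℝ) (hR : ContDiff ℝ 2 R)
    (σbar : ℝ)
    (hσbar : ∀ A ∈ fixedSubmodule ρ ⊓ L, ∀ Y ∈ L ⊓ (fixedSubmodule ρ ⊓ L)ᗮ,
      σbar * ‖Y‖ ^ 2 ≤ ⟪(hess R A) Y, Y⟫_ℝ) :
    ∀ A ∈ fixedSubmodule ρ ⊓ L, ∀ Y ∈ L ⊓ (fixedSubmodule ρ ⊓ L)ᗮ,
      σbar * ‖Y‖ ^ 2 ≤ ⟪(hess (augRisk μ ρ R) A) Y, Y⟫_ℝ := by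
  intro A hA Y hY
  set ρL : G → V →L[ℝ] V := fun g => (ρ g).toContinuousLinearEquiv
  have hρL : Continuous ρL :=
    continuous_clm_apply.2 fun v => hρ.comp (continuous_id.prodMk continuous_const)
  have hρY : Continuous fun g => ρ g Y := hρ.comp (continuous_id.prodMk continuous_const)
  have hAfix : ∀ g, ρ g A = A := hA.1
  have hYg : ∀ g, ρ g Y ∈ L ⊓ (fixedSubmodule ρ ⊓ L)ᗮ := fun g =>
    ⟨hL g Y hY.1,
      (ρ g).apply_mem_orthogonal (K := fixedSubmodule ρ ⊓ L) (fun w hw => hw.1 g) hY.2⟩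
  rw [inner_hess_apply]
  change _ ≤ fderiv ℝ (fderiv ℝ fun y => ∫ g, R (ρL g y) ∂μ) A Y Y
  rw [fderiv_fderiv_integral_comp_apply hR hρL]
  simp only [ρL, LinearIsometryEquiv.coe_coe'', hAfix]
  have hbound : ∀ g, σbar * ‖Y‖ ^ 2 ≤ fderiv ℝ (fderiv ℝ R) A (ρ g Y) (ρ g Y) := fun g => by
    rw [← inner_hess_apply, ← (ρ g).norm_map Y]
    exact hσbar A hA _ (hYg g)
  calc σbar * ‖Y‖ ^ 2 = ∫ _ : G, σbar * ‖Y‖ ^ 2 ∂μ := by simp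
    _ ≤ _ := integral_mono (integrable_const _)
        (((fderiv ℝ (fderiv ℝ R) A).continuous.comp hρY).clm_apply hρY).integrable_of_compactSpace
        hbound

/-- If `L` is invariant under the representation and
`⟪R''(A)Y, Y⟫ ≥ σ̄‖Y‖²` for all `A ∈ E`, `Y ∈ TEᗮ`, then also
`⟪(R^aug)''(A)Y, Y⟫ ≥ σ̄‖Y‖²` for all `A ∈ E`, `Y ∈ TEᗮ`. -/
theorem hessian_lower_bound_transfers
    {G V : Type*} [Group G] [TopologicalSpace G] [IsTopologicalGroup G] [CompactSpace G]
    [MeasurableSpace G] [BorelSpace G]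
    [NormedAddCommGroup V] [InnerProductSpace ℝ V] [FiniteDimensional ℝ V]
    (μ : Measure G) [μ.IsHaarMeasure] [IsProbabilityMeasure μ]
    (ρ : G →* (V ≃ₗᵢ[ℝ] V)) (hρ : Continuous fun p : G × V => ρ p.1 p.2)
    (L : Submodule ℝ V)
    (hL : ∀ (g : G), ∀ v ∈ L, ρ g v ∈ L)
    (R : V → ℝ) (hR : ContDiff ℝ 2 R)
    (σbar : ℝ)
    (hσbar : ∀ A ∈ fixedSubmodule ρ ⊓ L, ∀ Y ∈ L ⊓ (fixedSubmodule ρ ⊓ L)ᗮ,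
      σbar * ‖Y‖ ^ 2 ≤ ⟪(hess R A) Y, Y⟫_ℝ) :
    ∀ A ∈ fixedSubmodule ρ ⊓ L, ∀ Y ∈ L ⊓ (fixedSubmodule ρ ⊓ L)ᗮ,
      σbar * ‖Y‖ ^ 2 ≤ ⟪(hess (augRisk μ ρ R) A) Y, Y⟫_ℝ :=
  hessian_lower_bound_transfers_general μ ρ hρ L hL R hR σbar hσbar
end
end

section
/- Assume R is continuously differentiable, R^aug(A) ≥ 0 for all A ∈ L, and let γ > 0. If A : [0,∞) → L is a differentiable curve satisfying the regularized augmented gradient flow A'(t) = −Π_L ∇R^aug(A(t)) − γ Π_{E⊥} A(t) for all t ≥ 0, then for every t ≥ 0 the a priori bound ‖Π_{E⊥} A(t)‖² ≤ (2/γ) R^aug(A(0)) + ‖Π_{E⊥} A(0)‖² holds. -/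
/-!
`S_γ(A) = R^aug(A) + (γ/2) ‖Π_{E⊥} A‖²` is a Lyapunov function for the flow. Its gradient is
`∇R^aug(A) + γ Π_{E⊥} A`, and since `TE^⊥ ⊆ L` the flow is exactly the projected gradient flow
`A' = -Π_L ∇S_γ(A)`, along which `d/dt S_γ(A) = -‖Π_L ∇S_γ(A)‖² ≤ 0`. As `R^aug ≥ 0` on `L`,
`(γ/2) ‖Π_{E⊥} A(t)‖² ≤ S_γ(A(t)) ≤ S_γ(A(0))`. That `R^aug` is differentiable at all follows by
differentiating under the integral over the compact group.
-/

open MeasureTheory InnerProductSpace RealInnerProductSpace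

noncomputable section

theorem projSub_eq_starProjection {V : Type*} [NormedAddCommGroup V] [InnerProductSpace ℝ V]
    (K : Submodule ℝ V) [K.HasOrthogonalProjection] : projSub K = K.starProjection :=
  rfl

theorem differentiable_integral_comp_clm {G E F W : Type*} [TopologicalSpace G] [CompactSpace G]
    [MeasurableSpace G] [OpensMeasurableSpace G]
    [NormedAddCommGroup E] [NormedSpace ℝ E] [ProperSpace E]
    [NormedAddCommGroup F] [NormedSpace ℝ F] [NormedAddCommGroup W] [NormedSpace ℝ W]
    (μ : Measure G) [IsFiniteMeasure μ] {T : G → E →L[ℝ] F} (hT : Continuous T)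
    {R : F → W} (hR : ContDiff ℝ 1 R) :
    Differentiable ℝ (fun x => ∫ g, R (T g x) ∂μ) := by
  intro x
  have hTx : Continuous fun p : G × E => T p.1 p.2 :=
    (hT.comp continuous_fst).clm_apply continuous_snd
  set F' : G × E → E →L[ℝ] W := fun p => (fderiv ℝ R (T p.1 p.2)).comp (T p.1)
  have hF' : Continuous F' := ((hR.continuous_fderiv one_ne_zero).comp hTx).clm_comp
    (hT.comp continuous_fst)
  obtain ⟨C, hC⟩ := (isCompact_univ.prod (isCompact_closedBall x 1)).exists_bound_of_continuousOn
    hF'.continuousOn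
  have hRT : ∀ y, Continuous fun g => R (T g y) := fun y =>
    hR.continuous.comp (hTx.comp (Continuous.prodMk_left y))
  refine (hasFDerivAt_integral_of_dominated_of_fderiv_le (F' := fun y g => F' (g, y))
    (bound := fun _ => C) (Metric.ball_mem_nhds x one_pos)
    (.of_forall fun y => (hRT y).aestronglyMeasurable_of_compactSpace)
    ((hRT x).integrable_of_hasCompactSupport (.of_compactSpace _))
    (hF'.comp (Continuous.prodMk_left x)).aestronglyMeasurable_of_compactSpace
    (.of_forall fun g y hy => hC (g, y) ⟨trivial, Metric.ball_subset_closedBall hy⟩)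
    (integrable_const C) (.of_forall fun g y _ => ?_)).differentiableAt
  exact ((hR.differentiable one_ne_zero) _).hasFDerivAt.comp y (T g).hasFDerivAt

theorem inner_starProjection_eq_of_mem {V : Type*} [NormedAddCommGroup V] [InnerProductSpace ℝ V]
    (K : Submodule ℝ V) [K.HasOrthogonalProjection] (v : V) {w : V} (hw : w ∈ K) :
    ⟪K.starProjection v, w⟫ = ⟪v, w⟫ := by
  have h := K.starProjection_inner_eq_zero v w hw
  rw [inner_sub_left] at h
  linarith

section ProjectedGradientFlow

variable {V : Type*} [NormedAddCommGroup V] [InnerProductSpace ℝ V] [CompleteSpace V]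

def regularizedRisk (f : V → ℝ) (K : Submodule ℝ V) [K.HasOrthogonalProjection] (γ : ℝ) (A : V) :
    ℝ :=
  f A + γ / 2 * ‖K.starProjection A‖ ^ 2

theorem HasGradientAt.regularizedRisk {f : V → ℝ} {v x : V} (hf : HasGradientAt f v x)
    (K : Submodule ℝ V) [K.HasOrthogonalProjection] (γ : ℝ) :
    HasGradientAt (regularizedRisk f K γ) (v + γ • K.starProjection x) x := by
  rw [hasGradientAt_iff_hasFDerivAt] at hf ⊢
  refine (hf.add (K.starProjection.hasFDerivAt.norm_sq.const_mul (γ / 2))).congr_fderiv ?_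
  ext w
  have hPx : ⟪K.starProjection w, K.starProjection x⟫ = ⟪w, K.starProjection x⟫ :=
    inner_starProjection_eq_of_mem K w (K.starProjection_apply_mem x)
  simp only [toDual_apply_apply, inner_add_left, real_inner_smul_left, add_apply, smul_apply,
    ContinuousLinearMap.comp_apply, innerSL_apply_apply, nsmul_eq_mul]
  rw [real_inner_comm (K.starProjection w), hPx, real_inner_comm (K.starProjection x) w,
    smul_eq_mul, Nat.cast_ofNat]
  ring

theorem HasGradientAt.hasDerivAt_comp_neg_starProjection {S : V → ℝ} {v : V} {A : ℝ → V} {t : ℝ}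
    (hS : HasGradientAt S v (A t)) (L : Submodule ℝ V) [L.HasOrthogonalProjection]
    (hA : HasDerivAt A (-L.starProjection v) t) :
    HasDerivAt (S ∘ A) (-‖L.starProjection v‖ ^ 2) t := by
  have h := hS.hasFDerivAt.comp_hasDerivAt t hA
  rwa [toDual_apply_apply, inner_neg_right, ← inner_starProjection_eq_of_mem L v
    (L.starProjection_apply_mem v), real_inner_self_eq_norm_sq] at h

theorem antitoneOn_comp_of_projected_gradient_flow {S : V → ℝ} {v A : ℝ → V}
    (hS : ∀ t, 0 ≤ t → HasGradientAt S (v t) (A t)) (L : Submodule ℝ V)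
    [L.HasOrthogonalProjection] (hA : ∀ t, 0 ≤ t → HasDerivAt A (-L.starProjection (v t)) t) :
    AntitoneOn (S ∘ A) (Set.Ici 0) := by
  have hSA t (ht : 0 ≤ t) := (hS t ht).hasDerivAt_comp_neg_starProjection L (hA t ht)
  refine antitoneOn_of_hasDerivWithinAt_nonpos (convex_Ici 0)
    (fun t ht => (hSA t ht).continuousAt.continuousWithinAt)
    (fun t ht => (hSA t (interior_subset ht)).hasDerivWithinAt) fun t _ => ?_
  exact neg_nonpos.2 (sq_nonneg _)

end ProjectedGradientFlow

theorem regularized_flow_apriori_bound_general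
    {G V : Type*} [Group G] [TopologicalSpace G] [CompactSpace G]
    [MeasurableSpace G] [BorelSpace G]
    [NormedAddCommGroup V] [InnerProductSpace ℝ V] [FiniteDimensional ℝ V]
    (μ : Measure G) [IsProbabilityMeasure μ]
    (ρ : G →* (V ≃ₗᵢ[ℝ] V)) (hρ : Continuous fun p : G × V => ρ p.1 p.2)
    (L : Submodule ℝ V)
    (R : V → ℝ) (hR : ContDiff ℝ 1 R)
    (hpos : ∀ A ∈ L, 0 ≤ augRisk μ ρ R A)
    (γ : ℝ) (hγ : 0 < γ)
    (A : ℝ → V)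
    (hmem : ∀ t : ℝ, 0 ≤ t → A t ∈ L)
    (hode : ∀ t : ℝ, 0 ≤ t → HasDerivAt A
      (-(projSub L (gradient (augRisk μ ρ R) (A t)))
        - γ • projSub (L ⊓ (fixedSubmodule ρ ⊓ L)ᗮ) (A t)) t) :
    ∀ t : ℝ, 0 ≤ t →
      ‖projSub (L ⊓ (fixedSubmodule ρ ⊓ L)ᗮ) (A t)‖ ^ 2 ≤
        (2 / γ) * augRisk μ ρ R (A 0) + ‖projSub (L ⊓ (fixedSubmodule ρ ⊓ L)ᗮ) (A 0)‖ ^ 2 := by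
  intro t ht
  set K := L ⊓ (fixedSubmodule ρ ⊓ L)ᗮ
  have hρ_clm : Continuous fun g => ((ρ g).toContinuousLinearEquiv : V →L[ℝ] V) :=
    continuous_clm_apply.2 fun v => hρ.comp (.prodMk_left v)
  have hdiff : Differentiable ℝ (augRisk μ ρ R) := differentiable_integral_comp_clm μ hρ_clm hR
  have hflow (s : ℝ) (hs : 0 ≤ s) : HasDerivAt A (-L.starProjection
      (gradient (augRisk μ ρ R) (A s) + γ • K.starProjection (A s))) s := by
    have hKL : K.starProjection (A s) ∈ L :=
      (Submodule.mem_inf.1 (K.starProjection_apply_mem (A s))).1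
    rw [map_add, map_smul, Submodule.starProjection_eq_self_iff.2 hKL, neg_add]
    simpa only [← projSub_eq_starProjection, sub_eq_add_neg, neg_smul] using hode s hs
  have hdecay := antitoneOn_comp_of_projected_gradient_flow
    (fun s _ => (hdiff (A s)).hasGradientAt.regularizedRisk K γ) L hflow Set.self_mem_Ici ht ht
  have hpos_t := hpos (A t) (hmem t ht)
  simp only [Function.comp_apply, regularizedRisk, ← projSub_eq_starProjection] at hdecay
  field_simp
  linarith

/-- Along the regularized augmented gradient flow, the a priori bound
`‖Π_{Eᗮ} A(t)‖² ≤ (2/γ) R^aug(A(0)) + ‖Π_{Eᗮ} A(0)‖²` holds for all `t ≥ 0`. -/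
theorem regularized_flow_apriori_bound
    {G V : Type*} [Group G] [TopologicalSpace G] [IsTopologicalGroup G] [CompactSpace G]
    [MeasurableSpace G] [BorelSpace G]
    [NormedAddCommGroup V] [InnerProductSpace ℝ V] [FiniteDimensional ℝ V]
    (μ : Measure G) [μ.IsHaarMeasure] [IsProbabilityMeasure μ]
    (ρ : G →* (V ≃ₗᵢ[ℝ] V)) (hρ : Continuous fun p : G × V => ρ p.1 p.2)
    (L : Submodule ℝ V)
    (R : V → ℝ) (hR : ContDiff ℝ 1 R)
    (hpos : ∀ A ∈ L, 0 ≤ augRisk μ ρ R A)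
    (γ : ℝ) (hγ : 0 < γ)
    (A : ℝ → V)
    (hmem : ∀ t : ℝ, 0 ≤ t → A t ∈ L)
    (hode : ∀ t : ℝ, 0 ≤ t → HasDerivAt A
      (-(projSub L (gradient (augRisk μ ρ R) (A t)))
        - γ • projSub (L ⊓ (fixedSubmodule ρ ⊓ L)ᗮ) (A t)) t) :
    ∀ t : ℝ, 0 ≤ t →
      ‖projSub (L ⊓ (fixedSubmodule ρ ⊓ L)ᗮ) (A t)‖ ^ 2 ≤
        (2 / γ) * augRisk μ ρ R (A 0) + ‖projSub (L ⊓ (fixedSubmodule ρ ⊓ L)ᗮ) (A 0)‖ ^ 2 :=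
  regularized_flow_apriori_bound_general μ ρ hρ L R hR hpos γ hγ A hmem hode
end
end
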